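/- arXiv:2411.00384 — 3 statements merged into one kernel-verified Lean document; each statement's English description precedes it below -/
import Mathlib

section
/- Let M* be a matching in the colorful many-to-many multigraph G*. If there exists a one-to-one realization M⁰ of M* that is stable in the colorful one-to-one instance G⁰_{M'} (where M' is the projection of M⁰), then M* is stable in G*. -/
abbrev Clones {A : Type*} (cap : A → ℕ) : Type _ := (a : A) × Fin (cap a)

/-- A matching in the colorful many-to-many multigraph `G*`: a set of colored edges
`(a, b, c)` with `(a,b) ∈ E` and color `c < n₀`, at most one color per underlying
edge, respecting the capacities. -/
def ColMatching {A B : Type*} [DecidableEq A] [DecidableEq B]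
    (E : Finset (A × B)) (capA : A → ℕ) (capB : B → ℕ) (n0 : ℕ)
    (Ms : Finset (A × B × ℕ)) : Prop :=
  (∀ e ∈ Ms, (e.1, e.2.1) ∈ E ∧ e.2.2 < n0) ∧
    (∀ e ∈ Ms, ∀ f ∈ Ms, e.1 = f.1 → e.2.1 = f.2.1 → e = f) ∧
    (∀ a, (Ms.filter (fun e => e.1 = a)).card ≤ capA a) ∧
    ∀ b, (Ms.filter (fun e => e.2.1 = b)).card ≤ capB b

/-- The colored edge `(x,y)_c` blocks `Ms` in `G*`: `x` is not fully matched or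
prefers `(x,y)_c` to its worst `Ms`-edge (agents prefer lower colors, then their
usual ranking), and symmetrically for `y` (jobs prefer higher colors). -/
def ColBlocks {A B : Type*} [DecidableEq A] [DecidableEq B]
    (capA : A → ℕ) (capB : B → ℕ) (rA : A → B → ℕ) (rB : B → A → ℕ)
    (Ms : Finset (A × B × ℕ)) (x : A) (y : B) (c : ℕ) : Prop :=
  ((Ms.filter (fun e => e.1 = x)).card < capA x ∨
      ∃ f ∈ Ms, f.1 = x ∧ (c < f.2.2 ∨ (c = f.2.2 ∧ rA x y < rA x f.2.1))) ∧
    ((Ms.filter (fun e => e.2.1 = y)).card < capB y ∨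
      ∃ f ∈ Ms, f.2.1 = y ∧ (f.2.2 < c ∨ (f.2.2 = c ∧ rB y x < rB y f.1)))

/-- `Ms` is a stable matching in the colorful many-to-many multigraph `G*`: it is a
matching and no colored copy of an edge of `E` outside the projection of `Ms`
blocks it. -/
def ColStable {A B : Type*} [DecidableEq A] [DecidableEq B]
    (E : Finset (A × B)) (capA : A → ℕ) (capB : B → ℕ)
    (rA : A → B → ℕ) (rB : B → A → ℕ) (n0 : ℕ)
    (Ms : Finset (A × B × ℕ)) : Prop :=
  ColMatching E capA capB n0 Ms ∧
    ∀ x y c, (x, y) ∈ E → (x, y) ∉ Ms.image (fun e => (e.1, e.2.1)) → c < n0 →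
      ¬ ColBlocks capA capB rA rB Ms x y c

/-- `M0` is a one-to-one realization of the colored matching `Ms` on the clones:
colored clone edges projecting bijectively onto `Ms`, with each clone on at most
one edge, and the colors preserved. -/
def ColRealizes {A B : Type*} [DecidableEq A] [DecidableEq B]
    {capA : A → ℕ} {capB : B → ℕ}
    (M0 : Finset (Clones capA × Clones capB × ℕ)) (Ms : Finset (A × B × ℕ)) : Prop :=
  M0.image (fun e => (e.1.1, e.2.1.1, e.2.2)) = Ms ∧
    M0.card = Ms.card ∧
    ∀ e ∈ M0, ∀ f ∈ M0, e ≠ f → e.1 ≠ f.1 ∧ e.2.1 ≠ f.2.1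

/-- Edge set of the colorful one-to-one instance `G⁰_{M'}`: all colors `c < n₀` of
the edges of `E'_{M'}`, i.e. of the edges of `M'` (the colorless projection `Mcl` of
`M0` to clone pairs) together with all clone-copies of edges of `E` outside the
projection `Mproj` of `Ms` to `A × B`. -/
def inE0 {A B : Type*} [DecidableEq A] [DecidableEq B]
    {capA : A → ℕ} {capB : B → ℕ}
    (E : Finset (A × B)) (Mproj : Finset (A × B))
    (Mcl : Finset (Clones capA × Clones capB))
    (x : Clones capA) (y : Clones capB) (c n0 : ℕ) : Prop :=
  c < n0 ∧ ((x, y) ∈ Mcl ∨ ((x.1, y.1) ∈ E ∧ (x.1, y.1) ∉ Mproj))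

/-- The colored clone edge `(x,y)_c` blocks the one-to-one matching `M0` in
`G⁰_{M'}`: each endpoint is unmatched or prefers `(x,y)_c` to its `M0`-edge, where
clones of agents prefer lower colors, then rank, then lower clone index, and clones
of jobs prefer higher colors, then rank, then lower clone index. -/
def Blocks0 {A B : Type*} [DecidableEq A] [DecidableEq B]
    {capA : A → ℕ} {capB : B → ℕ}
    (rA : A → B → ℕ) (rB : B → A → ℕ)
    (M0 : Finset (Clones capA × Clones capB × ℕ))
    (x : Clones capA) (y : Clones capB) (c : ℕ) : Prop :=
  (∀ f ∈ M0, f.1 = x →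
      (c < f.2.2 ∨ (c = f.2.2 ∧ (rA x.1 y.1 < rA x.1 f.2.1.1 ∨
        (rA x.1 y.1 = rA x.1 f.2.1.1 ∧ (y.2 : ℕ) < (f.2.1.2 : ℕ)))))) ∧
    ∀ f ∈ M0, f.2.1 = y →
      (f.2.2 < c ∨ (f.2.2 = c ∧ (rB y.1 x.1 < rB y.1 f.1.1 ∨
        (rB y.1 x.1 = rB y.1 f.1.1 ∧ (x.2 : ℕ) < (f.1.2 : ℕ)))))

/-- `M0` is a stable matching in the colorful one-to-one instance `G⁰_{M'}`:
no edge of `G⁰_{M'}` outside `M0` blocks `M0`. -/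
def Stable0 {A B : Type*} [DecidableEq A] [DecidableEq B]
    {capA : A → ℕ} {capB : B → ℕ}
    (E : Finset (A × B)) (Mproj : Finset (A × B))
    (rA : A → B → ℕ) (rB : B → A → ℕ) (n0 : ℕ)
    (M0 : Finset (Clones capA × Clones capB × ℕ)) : Prop :=
  ∀ (x : Clones capA) (y : Clones capB) (c : ℕ),
    inE0 E Mproj (M0.image (fun e => (e.1, e.2.1))) x y c n0 →
    (x, y, c) ∉ M0 → ¬ Blocks0 rA rB M0 x y c

/-!
A pair `(x, y)_c` blocking `Ms` in `G*` lifts to a blocking clone pair `(⟨x, i⟩, ⟨y, j⟩)_c`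
of `G⁰_{M'}`. If `x` is under capacity, the realization uses fewer than `capA x` clones of
`x`, so some clone `⟨x, i⟩` is free; otherwise `x` prefers `(x, y)_c` to some `Ms`-edge, and
we take the clone of `x` carrying the realization of that edge, which is its only `M0`-edge
since clones have degree at most one. The same holds for `y`, and `(x, y)` lies outside the
projection of `Ms`, so the clone pair is an edge of `G⁰_{M'}` outside `M0`.
-/

lemma exists_clone_forall_ne {α A : Type*} [DecidableEq A] {cap : A → ℕ}
    (f : α → Clones cap) (s : Finset α) (a : A)
    (h : (s.filter fun e => (f e).1 = a).card < cap a) :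
    ∃ i : Fin (cap a), ∀ e ∈ s, f e ≠ ⟨a, i⟩ := by
  by_contra! hall
  choose g hgs hfg using hall
  have hg_inj : Function.Injective g := fun i j hij => by
    simpa using (hfg i).symm.trans ((congrArg f hij).trans (hfg j))
  have hle : (Finset.univ : Finset (Fin (cap a))).card ≤
      (s.filter fun e => (f e).1 = a).card :=
    Finset.card_le_card_of_injOn g
      (fun i _ => Finset.mem_filter.mpr ⟨hgs i, by rw [hfg i]⟩) hg_inj.injOn
  simp only [Finset.card_univ, Fintype.card_fin] at hle
  omega

namespace ColRealizes

variable {A B : Type*} [DecidableEq A] [DecidableEq B] {capA : A → ℕ} {capB : B → ℕ}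
  {M0 : Finset (Clones capA × Clones capB × ℕ)} {Ms : Finset (A × B × ℕ)}

lemma proj_mem (hreal : ColRealizes M0 Ms) {e : Clones capA × Clones capB × ℕ}
    (he : e ∈ M0) : (e.1.1, e.2.1.1, e.2.2) ∈ Ms :=
  hreal.1 ▸ Finset.mem_image_of_mem _ he

lemma injOn_proj (hreal : ColRealizes M0 Ms) :
    Set.InjOn (fun e : Clones capA × Clones capB × ℕ => (e.1.1, e.2.1.1, e.2.2)) M0 :=
  Finset.injOn_of_card_image_eq (by rw [hreal.1, hreal.2.1])

lemma card_filter_proj (hreal : ColRealizes M0 Ms) (p : A × B × ℕ → Prop) [DecidablePred p] :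
    (M0.filter fun e => p (e.1.1, e.2.1.1, e.2.2)).card = (Ms.filter p).card := by
  rw [← hreal.1, Finset.filter_image,
    Finset.card_image_of_injOn (hreal.injOn_proj.mono (Finset.filter_subset _ _))]

lemma eq_of_fst_eq (hreal : ColRealizes M0 Ms) {e g : Clones capA × Clones capB × ℕ}
    (he : e ∈ M0) (hg : g ∈ M0) (h : g.1 = e.1) : g = e := by
  by_contra hne
  exact (hreal.2.2 g hg e he hne).1 h

lemma eq_of_snd_fst_eq (hreal : ColRealizes M0 Ms) {e g : Clones capA × Clones capB × ℕ}
    (he : e ∈ M0) (hg : g ∈ M0) (h : g.2.1 = e.2.1) : g = e := by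
  by_contra hne
  exact (hreal.2.2 g hg e he hne).2 h

lemma exists_agent_clone (hreal : ColRealizes M0 Ms) {x : A} {P : A × B × ℕ → Prop}
    (hx : (Ms.filter fun e => e.1 = x).card < capA x ∨ ∃ f ∈ Ms, f.1 = x ∧ P f) :
    ∃ i : Fin (capA x), ∀ g ∈ M0, g.1 = ⟨x, i⟩ → P (g.1.1, g.2.1.1, g.2.2) := by
  rcases hx with hlt | ⟨f, hf, rfl, hPf⟩
  · rw [← hreal.card_filter_proj] at hlt
    obtain ⟨i, hi⟩ := exists_clone_forall_ne Prod.fst M0 x hlt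
    exact ⟨i, fun g hg hgx => absurd hgx (hi g hg)⟩
  · rw [← hreal.1] at hf
    obtain ⟨e, he, rfl⟩ := Finset.mem_image.mp hf
    refine ⟨e.1.2, fun g hg hgx => ?_⟩
    rwa [hreal.eq_of_fst_eq he hg hgx]

lemma exists_job_clone (hreal : ColRealizes M0 Ms) {y : B} {P : A × B × ℕ → Prop}
    (hy : (Ms.filter fun e => e.2.1 = y).card < capB y ∨ ∃ f ∈ Ms, f.2.1 = y ∧ P f) :
    ∃ j : Fin (capB y), ∀ g ∈ M0, g.2.1 = ⟨y, j⟩ → P (g.1.1, g.2.1.1, g.2.2) := by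
  rcases hy with hlt | ⟨f, hf, rfl, hPf⟩
  · rw [← hreal.card_filter_proj] at hlt
    obtain ⟨j, hj⟩ := exists_clone_forall_ne (fun e => e.2.1) M0 y hlt
    exact ⟨j, fun g hg hgy => absurd hgy (hj g hg)⟩
  · rw [← hreal.1] at hf
    obtain ⟨e, he, rfl⟩ := Finset.mem_image.mp hf
    refine ⟨e.2.1.2, fun g hg hgy => ?_⟩
    rwa [hreal.eq_of_snd_fst_eq he hg hgy]

end ColRealizes

theorem stmt10_general {A B : Type*} [DecidableEq A] [DecidableEq B]
    (capA : A → ℕ) (capB : B → ℕ)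
    (rA : A → B → ℕ) (rB : B → A → ℕ)
    (E : Finset (A × B)) (n0 : ℕ)
    (Ms : Finset (A × B × ℕ))
    (hmatch : ColMatching E capA capB n0 Ms)
    (M0 : Finset (Clones capA × Clones capB × ℕ))
    (hreal : ColRealizes M0 Ms)
    (hstable0 : Stable0 E (Ms.image (fun e => (e.1, e.2.1))) rA rB n0 M0) :
    ColStable E capA capB rA rB n0 Ms := by
  refine ⟨hmatch, fun x y c hE hnotin hc ⟨hx, hy⟩ => ?_⟩
  obtain ⟨i, hi⟩ := hreal.exists_agent_clone hx
  obtain ⟨j, hj⟩ := hreal.exists_job_clone hy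
  have hnotmem : ((⟨x, i⟩ : Clones capA), (⟨y, j⟩ : Clones capB), c) ∉ M0 := fun hm =>
    hnotin (Finset.mem_image_of_mem (fun e => (e.1, e.2.1)) (hreal.proj_mem hm))
  refine hstable0 ⟨x, i⟩ ⟨y, j⟩ c ⟨hc, Or.inr ⟨hE, hnotin⟩⟩ hnotmem ⟨?_, ?_⟩
  · exact fun g hg hgx => (hi g hg hgx).imp_right fun ⟨hcg, hr⟩ => ⟨hcg, Or.inl hr⟩
  · exact fun g hg hgy => (hj g hg hgy).imp_right fun ⟨hcg, hr⟩ => ⟨hcg, Or.inl hr⟩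

/-- Lemma 2: if `Ms` is a matching in the colorful many-to-many
multigraph `G*` and some one-to-one realization `M0` of `Ms` is stable in the
colorful cloned one-to-one instance `G⁰_{M'}` (where `M'` is the colorless
projection of `M0`), then `Ms` is stable in `G*`. -/
theorem stmt10 {A B : Type*} [Fintype A] [Fintype B] [DecidableEq A] [DecidableEq B]
    (capA : A → ℕ) (capB : B → ℕ)
    (rA : A → B → ℕ) (rB : B → A → ℕ)
    (hrA : ∀ a, Function.Injective (rA a)) (hrB : ∀ b, Function.Injective (rB b))
    (E : Finset (A × B)) (n0 : ℕ) (hn0 : n0 = ∑ a, capA a)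
    (Ms : Finset (A × B × ℕ))
    (hmatch : ColMatching E capA capB n0 Ms)
    (M0 : Finset (Clones capA × Clones capB × ℕ))
    (hreal : ColRealizes M0 Ms)
    (hstable0 : Stable0 E (Ms.image (fun e => (e.1, e.2.1))) rA rB n0 M0) :
    ColStable E capA capB rA rB n0 Ms :=
  stmt10_general capA capB rA rB E n0 Ms hmatch M0 hreal hstable0
end

section
/- Let M' be a perfect matching in a one-to-one bipartite instance H and suppose every alternating cycle C with respect to M' in H satisfies wt_{M'}(C) ≤ 0. Then for every perfect matching N' of H, Δ(M', N') ≥ 0, i.e., M' is a popular perfect matching in H. -/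
/-- Vote comparing neighbors of ranks `x` and `y` (lower rank = preferred). -/
def vsgn (x y : ℕ) : ℤ := if x < y then 1 else if y < x then -1 else 0

/-- `wt_{M'}(a,b) = vote_a(b, M'(a)) + vote_b(a, M'(b))` in a one-to-one instance. -/
def wt1 {A B : Type*} (rA : A → B → ℕ) (rB : B → A → ℕ) (M' : A ≃ B)
    (a : A) (b : B) : ℤ :=
  vsgn (rA a b) (rA a (M' a)) + vsgn (rB b a) (rB b (M'.symm b))

/-- An alternating cycle with respect to the perfect matching `M'` in the one-to-one
instance with edge relation `Edge`: it visits distinct vertices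
`f 0, g 0, f 1, g 1, …` cyclically, the edges `(f t, g t)` belonging to `M'` and the
edges `(f (t+1), g t)` being non-matching edges of the instance. -/
structure AltCycle1 {A B : Type*} (M' : A ≃ B) (Edge : A → B → Prop) where
  m : ℕ
  f : Fin (m + 2) → A
  g : Fin (m + 2) → B
  hf : Function.Injective f
  hg : Function.Injective g
  hmatch : ∀ t, M' (f t) = g t
  hnonmatch : ∀ t, M' (f (t + 1)) ≠ g t
  hedge : ∀ t, Edge (f (t + 1)) (g t)

/-- The weight `wt_{M'}(C)` of an alternating cycle. -/
def AltCycle1.wt {A B : Type*} {M' : A ≃ B} {Edge : A → B → Prop}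
    (C : AltCycle1 M' Edge) (rA : A → B → ℕ) (rB : B → A → ℕ) : ℤ :=
  ∑ t : Fin (C.m + 2),
    (wt1 rA rB M' (C.f t) (C.g t) + wt1 rA rB M' (C.f (t + 1)) (C.g t))

/-!
Put `ψ = N'⁻¹ ∘ M'`, a permutation of `A`. The components of `M' ⊕ N'` are the orbits of `ψ`:
a fixed point is an edge common to both matchings, and an orbit `a, ψ a, …` of length `k ≥ 2` is
an alternating cycle whose weight is `∑ wt_{M'}(x, N' x)` over the orbit, since its matching
edges have weight `0`. Votes are antisymmetric, so `∑ₐ wt_{M'}(a, N' a) = -Δ(M', N')`; and a sum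
over a finite set is nonpositive once its sum over every `ψ`-orbit is.
-/

open Finset Function

theorem Function.Periodic.sum_range_mul {M : Type*} [AddCommMonoid M] {g : ℕ → M} {k : ℕ}
    (hg : Periodic g k) (q : ℕ) : ∑ t ∈ range (q * k), g t = q • ∑ t ∈ range k, g t := by
  induction q with
  | zero => simp
  | succ q ih =>
    rw [add_mul, one_mul, sum_range_add, ih, succ_nsmul]
    congr 1
    refine sum_congr rfl fun t _ => ?_
    rw [add_comm]
    exact hg.nat_mul q t

theorem Equiv.Perm.sum_nonpos_of_sum_orbit_nonpos {α M : Type*} [Fintype α] [AddCommMonoid M]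
    [LinearOrder M] [IsOrderedCancelAddMonoid M] (σ : Perm α) (f : α → M)
    (h : ∀ a, ∑ t ∈ range (minimalPeriod σ a), f (σ^[t] a) ≤ 0) : ∑ a, f a ≤ 0 := by
  -- Average over the powers of `σ`: each orbit sum is repeated `orderOf σ / minimalPeriod σ a` times.
  have hrow : ∀ a, ∑ t ∈ range (orderOf σ), f (σ^[t] a) =
      (orderOf σ / minimalPeriod σ a) • ∑ t ∈ range (minimalPeriod σ a), f (σ^[t] a) := by
    intro a
    have hdvd : minimalPeriod σ a ∣ orderOf σ := by
      refine IsPeriodicPt.minimalPeriod_dvd ?_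
      rw [IsPeriodicPt, IsFixedPt, iterate_eq_pow, pow_orderOf_eq_one, coe_one, id]
    rw [← Periodic.sum_range_mul, Nat.div_mul_cancel hdvd]
    intro t
    simp only [iterate_add_apply, iterate_minimalPeriod]
  have hcol : ∀ t, ∑ a, f (σ^[t] a) = ∑ a, f a := fun t => by
    rw [iterate_eq_pow]; exact Equiv.sum_comp (σ ^ t) f
  have : orderOf σ • ∑ a, f a ≤ orderOf σ • 0 := calc
    orderOf σ • ∑ a, f a = ∑ a, ∑ t ∈ range (orderOf σ), f (σ^[t] a) := by
      rw [sum_comm, ← card_range (orderOf σ), ← sum_const, card_range]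
      exact sum_congr rfl fun t _ => (hcol t).symm
    _ ≤ orderOf σ • 0 := by
      rw [smul_zero]
      exact sum_nonpos fun a _ => hrow a ▸ nsmul_nonpos (h a) _
  exact le_of_nsmul_le_nsmul_right (orderOf_pos σ).ne' this

theorem Function.injective_iterate_fin_of_minimalPeriod_eq {α : Type*} {f : α → α} {x : α} {n : ℕ}
    (hn : minimalPeriod f x = n) : Injective fun t : Fin n => f^[t] x := fun s t hst =>
  Fin.ext <| iterate_injOn_Iio_minimalPeriod (by simp [hn]) (by simp [hn]) hst

theorem Function.iterate_fin_add_one_of_minimalPeriod_eq {α : Type*} {f : α → α} {x : α} {n : ℕ}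
    [NeZero n] (hn : minimalPeriod f x = n) (t : Fin n) : f^[(t + 1 : Fin n)] x = f (f^[t] x) := by
  rw [Fin.val_add, Fin.val_one', Nat.add_mod_mod]
  subst hn
  rw [iterate_mod_minimalPeriod_eq, iterate_succ_apply']

lemma vsgn_self (x : ℕ) : vsgn x x = 0 := by simp [vsgn]

lemma vsgn_swap (x y : ℕ) : vsgn y x = -vsgn x y := by
  unfold vsgn
  split_ifs <;> omega

lemma wt1_apply_self {A B : Type*} (rA : A → B → ℕ) (rB : B → A → ℕ) (M' : A ≃ B) (a : A) :
    wt1 rA rB M' a (M' a) = 0 := by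
  simp [wt1, vsgn_self]

lemma sum_wt1_eq_neg {A B : Type*} [Fintype A] [Fintype B]
    (rA : A → B → ℕ) (rB : B → A → ℕ) (M' N' : A ≃ B) :
    ∑ a, wt1 rA rB M' a (N' a) =
      -((∑ a, vsgn (rA a (M' a)) (rA a (N' a))) +
        ∑ b, vsgn (rB b (M'.symm b)) (rB b (N'.symm b))) := by
  rw [← N'.sum_comp (fun b => vsgn (rB b (M'.symm b)) (rB b (N'.symm b))), ← sum_add_distrib,
    ← sum_neg_distrib]
  refine sum_congr rfl fun a _ => ?_
  rw [wt1, N'.symm_apply_apply, vsgn_swap (rA a (M' a)), vsgn_swap (rB (N' a) (M'.symm (N' a))),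
    neg_add]

section AlternatingCycle

variable {A B : Type*} {Edge : A → B → Prop} {M' N' : A ≃ B}

def AltCycle1.ofMinimalPeriod (hN' : ∀ a, Edge a (N' a)) (a : A) (m : ℕ)
    (hm : minimalPeriod (M'.trans N'.symm) a = m + 2) : AltCycle1 M' Edge where
  m := m
  f t := (M'.trans N'.symm)^[t] a
  g t := M' ((M'.trans N'.symm)^[t] a)
  hf := injective_iterate_fin_of_minimalPeriod_eq hm
  hg := M'.injective.comp (injective_iterate_fin_of_minimalPeriod_eq hm)
  hmatch _ := rfl
  hnonmatch t h := by
    have := injective_iterate_fin_of_minimalPeriod_eq hm (M'.injective h)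
    simp at this
  hedge t := by
    rw [iterate_fin_add_one_of_minimalPeriod_eq hm]
    simpa using hN' (N'.symm (M' ((M'.trans N'.symm)^[t] a)))

theorem AltCycle1.wt_ofMinimalPeriod (rA : A → B → ℕ) (rB : B → A → ℕ)
    (hN' : ∀ a, Edge a (N' a)) (a : A) (m : ℕ) (hm : minimalPeriod (M'.trans N'.symm) a = m + 2) :
    (ofMinimalPeriod hN' a m hm).wt rA rB = ∑ t ∈ range (minimalPeriod (M'.trans N'.symm) a),
      wt1 rA rB M' ((M'.trans N'.symm)^[t] a) (N' ((M'.trans N'.symm)^[t] a)) := by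
  have hstep (t : Fin (m + 2)) : M' ((M'.trans N'.symm)^[t] a) =
      N' ((M'.trans N'.symm)^[(t + 1 : Fin (m + 2))] a) := by
    rw [iterate_fin_add_one_of_minimalPeriod_eq hm, Equiv.trans_apply, N'.apply_symm_apply]
  rw [hm, ← Fin.sum_univ_eq_sum_range, ← Equiv.sum_comp (Equiv.addRight 1)]
  refine sum_congr rfl fun t _ => ?_
  simp only [ofMinimalPeriod, wt1_apply_self, zero_add, Equiv.coe_addRight]
  exact congrArg _ (hstep t)

theorem sum_orbit_wt1_nonpos (rA : A → B → ℕ) (rB : B → A → ℕ)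
    (hcyc : ∀ C : AltCycle1 M' Edge, C.wt rA rB ≤ 0) (hN' : ∀ a, Edge a (N' a)) (a : A) :
    ∑ t ∈ range (minimalPeriod (M'.trans N'.symm) a),
      wt1 rA rB M' ((M'.trans N'.symm)^[t] a) (N' ((M'.trans N'.symm)^[t] a)) ≤ 0 := by
  match hm : minimalPeriod (M'.trans N'.symm) a with
  | 0 => simp
  | 1 =>
    have hfix : N'.symm (M' a) = a := minimalPeriod_eq_one_iff_isFixedPt.mp hm
    rw [sum_range_one, iterate_zero_apply, ← (N'.symm_apply_eq.mp hfix), wt1_apply_self]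
  | m + 2 =>
    have := hcyc (.ofMinimalPeriod hN' a m hm)
    rwa [AltCycle1.wt_ofMinimalPeriod, hm] at this

end AlternatingCycle

theorem stmt18_general {A B : Type*} [Fintype A] [Fintype B]
    (Edge : A → B → Prop)
    (rA : A → B → ℕ) (rB : B → A → ℕ)
    (M' : A ≃ B)
    (hcyc : ∀ C : AltCycle1 M' Edge, C.wt rA rB ≤ 0)
    (N' : A ≃ B) (hN' : ∀ a, Edge a (N' a)) :
    0 ≤ (∑ a : A, vsgn (rA a (M' a)) (rA a (N' a))) +
      ∑ b : B, vsgn (rB b (M'.symm b)) (rB b (N'.symm b)) := by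
  have := Equiv.Perm.sum_nonpos_of_sum_orbit_nonpos (M'.trans N'.symm)
    (fun a => wt1 rA rB M' a (N' a)) (sum_orbit_wt1_nonpos rA rB hcyc hN')
  rwa [sum_wt1_eq_neg, neg_nonpos] at this

/-- if `M'` is a perfect matching in a one-to-one bipartite instance
`H` such that every alternating cycle `C` w.r.t. `M'` has `wt_{M'}(C) ≤ 0`, then for
every perfect matching `N'` of `H` we have `Δ(M',N') ≥ 0`, i.e. `M'` is a popular
perfect matching of `H`. -/
theorem stmt18 {A B : Type*} [Fintype A] [Fintype B] [DecidableEq A] [DecidableEq B]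
    (Edge : A → B → Prop)
    (rA : A → B → ℕ) (rB : B → A → ℕ)
    (M' : A ≃ B) (hM' : ∀ a, Edge a (M' a))
    (hcyc : ∀ C : AltCycle1 M' Edge, C.wt rA rB ≤ 0)
    (N' : A ≃ B) (hN' : ∀ a, Edge a (N' a)) :
    0 ≤ (∑ a : A, vsgn (rA a (M' a)) (rA a (N' a))) +
      ∑ b : B, vsgn (rB b (M'.symm b)) (rB b (N'.symm b)) :=
  stmt18_general Edge rA rB M' hcyc N' hN'
end

section
/- Let M and N be perfect matchings in a many-to-many instance G, and C' a valid alternating cycle with respect to a realization M' such that N is obtained from M by switching along C' (i.e., N is the projection of M' ⊕ C'). If wt_{M'}(C') > 0, then Σ_{v} vote_v(M,N) < 0, i.e., N is more popular than M. -/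
/-- Vote in the cloned instance: clone preferences are lexicographic, first by the
rank of the underlying vertex, then by the clone index (lower index preferred). -/
def lsgn (r j r' j' : ℕ) : ℤ :=
  if r < r' ∨ (r = r' ∧ j < j') then 1
  else if r' < r ∨ (r' = r ∧ j' < j) then -1 else 0

/-- `M(a)`, the set of jobs matched to agent `a`. -/
def jobsOf {A B : Type*} [DecidableEq A] [DecidableEq B]
    (M : Finset (A × B)) (a : A) : Finset B :=
  (M.filter (fun e => e.1 = a)).image Prod.snd

/-- `M(b)`, the set of agents matched to job `b`. -/
def agentsOf {A B : Type*} [DecidableEq A] [DecidableEq B]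
    (M : Finset (A × B)) (b : B) : Finset A :=
  (M.filter (fun e => e.2 = b)).image Prod.fst

/-- The set of possible values `∑_{u ∈ S} vote(u, σ u)` over bijections `σ : S ≃ T`;
the vote `vote_v(S,T)` of the paper is the least element of this set. -/
def voteSet {B : Type*} (r : B → ℕ) (S T : Finset B) : Set ℤ :=
  {z | ∃ σ : {x // x ∈ S} ≃ {x // x ∈ T},
    z = ∑ x : {x // x ∈ S}, vsgn (r x.1) (r ((σ x).1))}

/-- A perfect matching in the many-to-many instance: `M ⊆ E` and every vertex `v`
is matched to exactly `cap v` partners. -/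
def IsPerfect {A B : Type*} [DecidableEq A] [DecidableEq B]
    (E M : Finset (A × B)) (capA : A → ℕ) (capB : B → ℕ) : Prop :=
  M ⊆ E ∧ (∀ a, (M.filter (fun e => e.1 = a)).card = capA a) ∧
    ∀ b, (M.filter (fun e => e.2 = b)).card = capB b

/-- `M` is a popular perfect matching: `M` is perfect and `Δ(M,N) ≥ 0` for every
perfect matching `N`, where each vertex votes using the most adversarial bijection
between `M(v) \ N(v)` and `N(v) \ M(v)`.  Since the minima at distinct vertices are
independent, `Δ(M,N) ≥ 0` is equivalent to: every choice of one vote value per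
vertex sums to a nonnegative number. -/
def PopularPerfect {A B : Type*} [Fintype A] [Fintype B] [DecidableEq A] [DecidableEq B]
    (E : Finset (A × B)) (capA : A → ℕ) (capB : B → ℕ)
    (rA : A → B → ℕ) (rB : B → A → ℕ) (M : Finset (A × B)) : Prop :=
  IsPerfect E M capA capB ∧
    ∀ N : Finset (A × B), IsPerfect E N capA capB →
      ∀ za : A → ℤ, ∀ zb : B → ℤ,
        (∀ a, za a ∈ voteSet (rA a) (jobsOf M a \ jobsOf N a) (jobsOf N a \ jobsOf M a)) →
        (∀ b, zb b ∈ voteSet (rB b) (agentsOf M b \ agentsOf N b) (agentsOf N b \ agentsOf M b)) →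
        0 ≤ (∑ a, za a) + ∑ b, zb b

/-- `M'` is a one-to-one realization of the many-to-many matching `M` in the cloned
instance: every `M'`-edge projects to an `M`-edge, and distinct clones of the same
agent are matched to clones of distinct jobs (so each `M`-edge is used once). -/
def Realizes {A B : Type*} {capA : A → ℕ} {capB : B → ℕ}
    (M' : Clones capA ≃ Clones capB) (M : Finset (A × B)) : Prop :=
  (∀ x, (x.1, (M' x).1) ∈ M) ∧
    ∀ x y : Clones capA, x ≠ y → x.1 = y.1 → (M' x).1 ≠ (M' y).1

/-- The edge set `E'_{M'}` of the instance `G'_{M'}`: the edges of `M'` together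
with all clone-copies of edges of `E \ M`. -/
def inEM {A B : Type*} [DecidableEq A] [DecidableEq B] {capA : A → ℕ} {capB : B → ℕ}
    (E M : Finset (A × B)) (M' : Clones capA ≃ Clones capB)
    (x : Clones capA) (y : Clones capB) : Prop :=
  M' x = y ∨ ((x.1, y.1) ∈ E ∧ (x.1, y.1) ∉ M)

/-- `wt_{M'}(x,y) = vote_x(y, M'(x)) + vote_y(x, M'(y))` in the cloned instance. -/
def wtEdge {A B : Type*} {capA : A → ℕ} {capB : B → ℕ}
    (rA : A → B → ℕ) (rB : B → A → ℕ) (M' : Clones capA ≃ Clones capB)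
    (x : Clones capA) (y : Clones capB) : ℤ :=
  lsgn (rA x.1 y.1) y.2 (rA x.1 (M' x).1) (M' x).2 +
    lsgn (rB y.1 x.1) x.2 (rB y.1 (M'.symm y).1) (M'.symm y).2

/-- An alternating cycle with respect to the (perfect one-to-one) matching `M'`,
with non-matching edges taken from the edge relation `Edge`: the cycle visits the
distinct clones `f 0, g 0, f 1, g 1, …` cyclically, `(f t, g t)` being `M'`-edges
and `(f (t+1), g t)` being non-matching edges of the instance. -/
structure AltCycle {A B : Type*} {capA : A → ℕ} {capB : B → ℕ}
    (M' : Clones capA ≃ Clones capB)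
    (Edge : Clones capA → Clones capB → Prop) where
  m : ℕ
  f : Fin (m + 2) → Clones capA
  g : Fin (m + 2) → Clones capB
  hf : Function.Injective f
  hg : Function.Injective g
  hmatch : ∀ t, M' (f t) = g t
  hnonmatch : ∀ t, M' (f (t + 1)) ≠ g t
  hedge : ∀ t, Edge (f (t + 1)) (g t)

/-- The weight `wt_{M'}(C)` of an alternating cycle: the sum of the weights of all
its edges. -/
def AltCycle.wt {A B : Type*} {capA : A → ℕ} {capB : B → ℕ}
    {M' : Clones capA ≃ Clones capB} {Edge : Clones capA → Clones capB → Prop}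
    (C : AltCycle M' Edge) (rA : A → B → ℕ) (rB : B → A → ℕ) : ℤ :=
  ∑ t : Fin (C.m + 2),
    (wtEdge rA rB M' (C.f t) (C.g t) + wtEdge rA rB M' (C.f (t + 1)) (C.g t))

/-- A cycle is valid if no two of its non-matching edges are clone-copies of the
same edge of `G` (matching edges are automatically distinct copies). -/
def AltCycle.Valid {A B : Type*} {capA : A → ℕ} {capB : B → ℕ}
    {M' : Clones capA ≃ Clones capB} {Edge : Clones capA → Clones capB → Prop}
    (C : AltCycle M' Edge) : Prop :=
  Function.Injective (fun t : Fin (C.m + 2) => ((C.f (t + 1)).1, (C.g t).1))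

/-! Switching along `C` changes `M` exactly on the projected cycle edges: a realization of a
perfect matching uses every edge of `M`, so `M \ N` consists of the projections of the matching
edges of `C` and `N \ M` of those of its non-matching edges, the latter projection being
injective by validity of `C`. Walking along `C` thus gives, at every vertex `v`, one bijection
between `M(v) \ N(v)` and `N(v) \ M(v)`, whose vote sum bounds `vote_v(M,N)` from above. Summed
over all vertices, these votes regroup edge by edge into `-wt_{M'}(C)`: matching edges have
weight `0`, and on a non-matching edge the two ends compare distinct vertices, so the clone-level
votes are the vertex-level ones. -/

open Finset Function

lemma lsgn_self (r j : ℕ) : lsgn r j r j = 0 := by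
  unfold lsgn; split_ifs <;> omega

lemma lsgn_of_ne {r r' : ℕ} (j j' : ℕ) (h : r ≠ r') : lsgn r j r' j' = vsgn r r' := by
  unfold lsgn vsgn; split_ifs <;> omega

lemma Finset.sum_fiberwise_apply {ι κ R : Type*} [Fintype κ] [DecidableEq κ] [AddCommMonoid R]
    (s : Finset ι) (g : ι → κ) (f : κ → ι → R) :
    ∑ j, ∑ i ∈ s with g i = j, f j i = ∑ i ∈ s, f (g i) i := by
  rw [← sum_fiberwise s g (fun i => f (g i) i)]
  exact sum_congr rfl fun j _ => sum_congr rfl fun i hi => by rw [(mem_filter.1 hi).2]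

lemma Finset.image_univ_comp_equiv {α β γ : Type*} [Fintype α] [Fintype β] [DecidableEq β]
    [DecidableEq γ] (e : α ≃ β) (h : β → γ) : univ.image (h ∘ e) = univ.image h := by
  rw [← image_image, image_univ_equiv]

section ImageSdiff

variable {X Z : Type*} [Fintype X] [DecidableEq Z] {φ ψ : X → Z} {s : Finset X}

lemma image_univ_sdiff_of_eqOn_compl (hφ : Injective φ) (heq : ∀ x ∉ s, ψ x = φ x)
    (hnew : ∀ x ∈ s, ∀ y, ψ x ≠ φ y) : univ.image φ \ univ.image ψ = s.image φ := by
  ext z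
  simp only [mem_sdiff, mem_image, mem_univ, true_and, not_exists]
  constructor
  · rintro ⟨⟨x, rfl⟩, hz⟩
    by_contra hx
    exact hz x (heq x fun hs => hx ⟨x, hs, rfl⟩)
  · rintro ⟨x, hs, rfl⟩
    refine ⟨⟨x, rfl⟩, fun y hy => ?_⟩
    by_cases hys : y ∈ s
    · exact hnew y hys x hy
    · exact hys (hφ ((heq y hys).symm.trans hy) ▸ hs)

lemma image_univ_sdiff_of_eqOn_compl' (heq : ∀ x ∉ s, ψ x = φ x)
    (hnew : ∀ x ∈ s, ∀ y, ψ x ≠ φ y) : univ.image ψ \ univ.image φ = s.image ψ := by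
  ext z
  simp only [mem_sdiff, mem_image, mem_univ, true_and, not_exists]
  constructor
  · rintro ⟨⟨x, rfl⟩, hz⟩
    by_contra hx
    exact hz x (heq x fun hs => hx ⟨x, hs, rfl⟩).symm
  · rintro ⟨x, hs, rfl⟩
    exact ⟨⟨x, rfl⟩, fun y hy => hnew x hs y hy.symm⟩

end ImageSdiff

section Votes

variable {A B : Type*} [DecidableEq A] [DecidableEq B]

lemma mem_jobsOf {P : Finset (A × B)} {a : A} {b : B} : b ∈ jobsOf P a ↔ (a, b) ∈ P := by
  simp [jobsOf]

lemma mem_agentsOf {P : Finset (A × B)} {a : A} {b : B} : a ∈ agentsOf P b ↔ (a, b) ∈ P := by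
  simp [agentsOf]

lemma jobsOf_sdiff (P Q : Finset (A × B)) (a : A) :
    jobsOf P a \ jobsOf Q a = jobsOf (P \ Q) a := by
  ext b; simp only [mem_sdiff, mem_jobsOf]

lemma agentsOf_sdiff (P Q : Finset (A × B)) (b : B) :
    agentsOf P b \ agentsOf Q b = agentsOf (P \ Q) b := by
  ext a; simp only [mem_sdiff, mem_agentsOf]

lemma jobsOf_image {ι : Type*} (s : Finset ι) (u : ι → A) (p : ι → B) (a : A) :
    jobsOf (s.image fun i => (u i, p i)) a = {i ∈ s | u i = a}.image p := by
  ext b; simp [mem_jobsOf, and_assoc]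

lemma agentsOf_image {ι : Type*} (s : Finset ι) (u : ι → B) (p : ι → A) (b : B) :
    agentsOf (s.image fun i => (p i, u i)) b = {i ∈ s | u i = b}.image p := by
  ext a; simp only [mem_agentsOf, mem_image, mem_filter, Prod.mk.injEq]; grind

lemma sum_vsgn_mem_voteSet {ι : Type*} (r : B → ℕ) (I : Finset ι) {p q : ι → B}
    (hp : Set.InjOn p I) (hq : Set.InjOn q I) :
    ∑ i ∈ I, vsgn (r (p i)) (r (q i)) ∈ voteSet r (I.image p) (I.image q) := by
  have hbij {p : ι → B} (hp : Set.InjOn p I) : Bijective fun i : I =>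
      (⟨p i, mem_image_of_mem p i.2⟩ : I.image p) :=
    ⟨fun i j h => Subtype.ext (hp i.2 j.2 (congrArg Subtype.val h)), fun ⟨b, hb⟩ => by
      obtain ⟨i, hi, rfl⟩ := mem_image.1 hb
      exact ⟨⟨i, hi⟩, rfl⟩⟩
  set eP := Equiv.ofBijective _ (hbij hp)
  refine ⟨eP.symm.trans (Equiv.ofBijective _ (hbij hq)), ?_⟩
  rw [← sum_coe_sort I, ← eP.sum_comp]
  simp [eP]

lemma sum_vsgn_mem_voteSet_jobsOf {ι : Type*} [Fintype ι] (r : B → ℕ) {u : ι → A}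
    {p q : ι → B} (hp : Injective fun i => (u i, p i)) (hq : Injective fun i => (u i, q i))
    (a : A) :
    ∑ i with u i = a, vsgn (r (p i)) (r (q i)) ∈ voteSet r
      (jobsOf (univ.image fun i => (u i, p i)) a) (jobsOf (univ.image fun i => (u i, q i)) a) := by
  have hu {i j} (hi : i ∈ ({i | u i = a} : Finset ι)) (hj : j ∈ ({i | u i = a} : Finset ι)) :
      u i = u j := (mem_filter.1 hi).2.trans (mem_filter.1 hj).2.symm
  rw [jobsOf_image, jobsOf_image]
  exact sum_vsgn_mem_voteSet r _ (fun i hi j hj h => hp (Prod.ext (hu hi hj) h))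
    (fun i hi j hj h => hq (Prod.ext (hu hi hj) h))

lemma sum_vsgn_mem_voteSet_agentsOf {ι : Type*} [Fintype ι] (r : A → ℕ) {u : ι → B}
    {p q : ι → A} (hp : Injective fun i => (p i, u i)) (hq : Injective fun i => (q i, u i))
    (b : B) :
    ∑ i with u i = b, vsgn (r (p i)) (r (q i)) ∈ voteSet r
      (agentsOf (univ.image fun i => (p i, u i)) b)
      (agentsOf (univ.image fun i => (q i, u i)) b) := by
  have hu {i j} (hi : i ∈ ({i | u i = b} : Finset ι)) (hj : j ∈ ({i | u i = b} : Finset ι)) :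
      u i = u j := (mem_filter.1 hi).2.trans (mem_filter.1 hj).2.symm
  rw [agentsOf_image, agentsOf_image]
  exact sum_vsgn_mem_voteSet r _ (fun i hi j hj h => hp (Prod.ext h (hu hi hj)))
    (fun i hi j hj h => hq (Prod.ext h (hu hi hj)))

end Votes

section Realization

variable {A B : Type*} {capA : A → ℕ} {capB : B → ℕ} {M' : Clones capA ≃ Clones capB}
  {M : Finset (A × B)}

lemma Realizes.injective_edge (h : Realizes M' M) :
    Injective fun x : Clones capA => (x.1, (M' x).1) := fun x y hxy => by
  by_contra hne
  exact h.2 x y hne (congrArg Prod.fst hxy) (congrArg Prod.snd hxy)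

lemma Realizes.image_edge_eq [Fintype A] [DecidableEq A] [DecidableEq B] (h : Realizes M' M)
    (hcard : ∀ a, #{e ∈ M | e.1 = a} = capA a) :
    univ.image (fun x : Clones capA => (x.1, (M' x).1)) = M := by
  refine eq_of_subset_of_card_le (fun e he => ?_) ?_
  · obtain ⟨x, -, rfl⟩ := mem_image.1 he
    exact h.1 x
  · rw [card_image_of_injective _ h.injective_edge, card_univ, Fintype.card_sigma,
      card_eq_sum_card_fiberwise (f := Prod.fst) (t := univ) fun _ _ => mem_univ _]
    simp [hcard]

lemma wtEdge_apply_self (rA : A → B → ℕ) (rB : B → A → ℕ) (x : Clones capA) :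
    wtEdge rA rB M' x (M' x) = 0 := by
  rw [wtEdge, M'.symm_apply_apply, lsgn_self, lsgn_self, add_zero]

lemma wtEdge_of_ne {rA : A → B → ℕ} {rB : B → A → ℕ} (hrA : ∀ a, Injective (rA a))
    (hrB : ∀ b, Injective (rB b)) {x : Clones capA} {y : Clones capB}
    (hy : y.1 ≠ (M' x).1) (hx : x.1 ≠ (M'.symm y).1) :
    wtEdge rA rB M' x y = vsgn (rA x.1 y.1) (rA x.1 (M' x).1) +
      vsgn (rB y.1 x.1) (rB y.1 (M'.symm y).1) := by
  rw [wtEdge, lsgn_of_ne _ _ ((hrA _).ne hy), lsgn_of_ne _ _ ((hrB _).ne hx)]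

end Realization

namespace AltCycle

variable {A B : Type*} [DecidableEq A] [DecidableEq B] {capA : A → ℕ} {capB : B → ℕ}
  {M' : Clones capA ≃ Clones capB} {E M : Finset (A × B)} (C : AltCycle M' (inEM E M M'))

lemma symm_apply_g (t : Fin (C.m + 2)) : M'.symm (C.g t) = C.f t := by
  rw [← C.hmatch, Equiv.symm_apply_apply]

lemma nonmatching_not_mem (t : Fin (C.m + 2)) : ((C.f (t + 1)).1, (C.g t).1) ∉ M :=
  (C.hedge t).elim (fun h => absurd h (C.hnonmatch t)) And.right

lemma matching_mem (hreal : Realizes M' M) (t : Fin (C.m + 2)) : ((C.f t).1, (C.g t).1) ∈ M :=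
  C.hmatch t ▸ hreal.1 (C.f t)

lemma injective_matching (hreal : Realizes M' M) :
    Injective fun t => ((C.f t).1, (C.g t).1) := by
  convert hreal.injective_edge.comp C.hf using 2 with t
  simp [C.hmatch]

lemma wt_eq_sum_vsgn {rA : A → B → ℕ} {rB : B → A → ℕ} (hrA : ∀ a, Injective (rA a))
    (hrB : ∀ b, Injective (rB b)) (hreal : Realizes M' M) :
    C.wt rA rB = ∑ t, (vsgn (rA (C.f (t + 1)).1 (C.g t).1) (rA (C.f (t + 1)).1 (C.g (t + 1)).1) +
      vsgn (rB (C.g t).1 (C.f (t + 1)).1) (rB (C.g t).1 (C.f t).1)) := by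
  refine sum_congr rfl fun t _ => ?_
  have hy : (C.g t).1 ≠ (M' (C.f (t + 1))).1 := fun h =>
    C.nonmatching_not_mem t (by rw [h, C.hmatch]; exact C.matching_mem hreal (t + 1))
  have hx : (C.f (t + 1)).1 ≠ (M'.symm (C.g t)).1 := fun h =>
    C.nonmatching_not_mem t (by rw [h, C.symm_apply_g]; exact C.matching_mem hreal t)
  rw [← C.hmatch t, wtEdge_apply_self, zero_add, C.hmatch t, wtEdge_of_ne hrA hrB hy hx,
    C.hmatch, C.symm_apply_g]

section Switch

variable {N' : Clones capA ≃ Clones capB} {N : Finset (A × B)}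

lemma switch_eq_of_not_mem (hfix : ∀ x, (∀ t, C.f t ≠ x) → N' x = M' x) {x : Clones capA}
    (hx : x ∉ univ.image fun t => C.f (t + 1)) : (x.1, (N' x).1) = (x.1, (M' x).1) := by
  rw [hfix x fun t ht => hx (mem_image.2 ⟨t - 1, mem_univ _, by rwa [sub_add_cancel]⟩)]

lemma switch_ne_of_mem (hreal : Realizes M' M) (hswap : ∀ t, N' (C.f (t + 1)) = C.g t)
    {x : Clones capA} (hx : x ∈ univ.image fun t => C.f (t + 1)) (y : Clones capA) :
    (x.1, (N' x).1) ≠ (y.1, (M' y).1) := by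
  obtain ⟨t, -, rfl⟩ := mem_image.1 hx
  intro h
  exact C.nonmatching_not_mem t (by rw [← hswap, h]; exact hreal.1 y)

variable [Fintype A]

lemma sdiff_switch_eq_matching (hcard : ∀ a, #{e ∈ M | e.1 = a} = capA a)
    (hreal : Realizes M' M) (hswap : ∀ t, N' (C.f (t + 1)) = C.g t)
    (hfix : ∀ x, (∀ t, C.f t ≠ x) → N' x = M' x)
    (hN : N = univ.image fun x : Clones capA => (x.1, (N' x).1)) :
    M \ N = univ.image fun t => ((C.f t).1, (C.g t).1) := by
  conv_lhs => rw [← hreal.image_edge_eq hcard, hN, image_univ_sdiff_of_eqOn_compl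
    hreal.injective_edge (fun _ => C.switch_eq_of_not_mem hfix)
    (fun _ => C.switch_ne_of_mem hreal hswap)]
  rw [image_image]
  simp only [comp_def, C.hmatch]
  exact image_univ_comp_equiv (Equiv.addRight 1) fun t => ((C.f t).1, (C.g t).1)

lemma switch_sdiff_eq_nonmatching (hcard : ∀ a, #{e ∈ M | e.1 = a} = capA a)
    (hreal : Realizes M' M) (hswap : ∀ t, N' (C.f (t + 1)) = C.g t)
    (hfix : ∀ x, (∀ t, C.f t ≠ x) → N' x = M' x)
    (hN : N = univ.image fun x : Clones capA => (x.1, (N' x).1)) :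
    N \ M = univ.image fun t => ((C.f (t + 1)).1, (C.g t).1) := by
  conv_lhs => rw [← hreal.image_edge_eq hcard, hN, image_univ_sdiff_of_eqOn_compl'
    (fun _ => C.switch_eq_of_not_mem hfix) (fun _ => C.switch_ne_of_mem hreal hswap)]
  rw [image_image]
  simp only [comp_def, hswap]

end Switch

end AltCycle

/-- let `M` be a perfect matching of a many-to-many instance `G` with
realization `M'`, and let `C` be a *valid* alternating cycle w.r.t. `M'` in
`G'_{M'}` with `wt_{M'}(C) > 0`.  Let `N'` be the matching obtained from `M'` by
switching along `C` and let `N` be its projection to `G`.  Then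
`Δ(M,N) = Σ_v vote_v(M,N) < 0` (the vote values `za`, `zb` being the minima), i.e.
`N` is more popular than `M`. -/
theorem stmt19 {A B : Type*} [Fintype A] [Fintype B] [DecidableEq A] [DecidableEq B]
    (capA : A → ℕ) (capB : B → ℕ)
    (rA : A → B → ℕ) (rB : B → A → ℕ)
    (hrA : ∀ a, Function.Injective (rA a)) (hrB : ∀ b, Function.Injective (rB b))
    (E M : Finset (A × B)) (hM : IsPerfect E M capA capB)
    (M' : Clones capA ≃ Clones capB) (hreal : Realizes M' M)
    (C : AltCycle M' (inEM E M M')) (hvalid : C.Valid) (hC : 0 < C.wt rA rB)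
    (N' : Clones capA ≃ Clones capB)
    (hswap : ∀ t, N' (C.f (t + 1)) = C.g t)
    (hfix : ∀ x : Clones capA, (∀ t, C.f t ≠ x) → N' x = M' x)
    (N : Finset (A × B))
    (hN : N = Finset.univ.image (fun x : Clones capA => (x.1, (N' x).1)))
    (za : A → ℤ) (zb : B → ℤ)
    (hza : ∀ a, IsLeast
      (voteSet (rA a) (jobsOf M a \ jobsOf N a) (jobsOf N a \ jobsOf M a)) (za a))
    (hzb : ∀ b, IsLeast
      (voteSet (rB b) (agentsOf M b \ agentsOf N b) (agentsOf N b \ agentsOf M b)) (zb b)) :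
    (∑ a, za a) + ∑ b, zb b < 0 := by
  have hMN := C.sdiff_switch_eq_matching hM.2.1 hreal hswap hfix hN
  have hNM := C.switch_sdiff_eq_nonmatching hM.2.1 hreal hswap hfix hN
  have hMN' : M \ N = univ.image fun t => ((C.f (t + 1)).1, (C.g (t + 1)).1) := by
    rw [hMN]
    exact (image_univ_comp_equiv (Equiv.addRight 1) fun t => ((C.f t).1, (C.g t).1)).symm
  have hza' : ∀ a, za a ≤ ∑ t with (C.f (t + 1)).1 = a,
      vsgn (rA a (C.g (t + 1)).1) (rA a (C.g t).1) := fun a => by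
    refine (hza a).2 ?_
    rw [jobsOf_sdiff, jobsOf_sdiff, hMN', hNM]
    exact sum_vsgn_mem_voteSet_jobsOf _ ((C.injective_matching hreal).comp (add_left_injective 1))
      hvalid a
  have hzb' : ∀ b, zb b ≤ ∑ t with (C.g t).1 = b,
      vsgn (rB b (C.f t).1) (rB b (C.f (t + 1)).1) := fun b => by
    refine (hzb b).2 ?_
    rw [agentsOf_sdiff, agentsOf_sdiff, hMN, hNM]
    exact sum_vsgn_mem_voteSet_agentsOf _ (C.injective_matching hreal) hvalid b
  calc (∑ a, za a) + ∑ b, zb b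
      ≤ (∑ a, ∑ t with (C.f (t + 1)).1 = a, vsgn (rA a (C.g (t + 1)).1) (rA a (C.g t).1)) +
        ∑ b, ∑ t with (C.g t).1 = b, vsgn (rB b (C.f t).1) (rB b (C.f (t + 1)).1) :=
        add_le_add (sum_le_sum fun a _ => hza' a) (sum_le_sum fun b _ => hzb' b)
    _ = -C.wt rA rB := by
        rw [sum_fiberwise_apply, sum_fiberwise_apply, C.wt_eq_sum_vsgn hrA hrB hreal,
          ← sum_add_distrib, ← sum_neg_distrib]
        refine sum_congr rfl fun t _ => ?_
        rw [vsgn_swap, vsgn_swap (rB _ _)]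
        ring
    _ < 0 := neg_neg_of_pos hC
end
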